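/- In the Pascal triangle graph, the intrinsic metric on level n satisfies ρₙ((n,i),(n,j)) = |i−j|/n for all 0 ≤ i,j ≤ n and n ≥ 1; hence (Γₙ, ρₙ) is isometric to the set {i/n : 0 ≤ i ≤ n} ⊂ [0,1] with the usual metric. -/

import Mathlib

open Finset

/-- A probability distribution on a finite set, given by its weights. -/
def IsProb {X : Type*} [Fintype X] (μ : X → ℝ) : Prop :=
  (∀ x, 0 ≤ μ x) ∧ ∑ x, μ x = 1

/-- A coupling of `μ` and `ν`: nonnegative weights whose first marginal is `μ`
and second marginal is `ν`. -/
def IsCoupling {X : Type*} [Fintype X] (μ ν : X → ℝ) (c : X → X → ℝ) : Prop :=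
  (∀ x y, 0 ≤ c x y) ∧ (∀ x, ∑ y, c x y = μ x) ∧ (∀ y, ∑ x, c x y = ν y)

/-- The Kantorovich (transportation) distance between two probability
distributions on a finite (semi)metric space `(X, d)`. -/
noncomputable def kant {X : Type*} [Fintype X] (d : X → X → ℝ) (μ ν : X → ℝ) : ℝ :=
  sInf { r | ∃ c, IsCoupling μ ν c ∧ r = ∑ x, ∑ y, d x y * c x y }

/-- The Dirac (point mass) distribution at a point. -/
def dirac {X : Type*} [DecidableEq X] (x : X) : X → ℝ := fun y => if y = x then 1 else 0
/-- An `ℕ`-graded graph (Bratteli diagram): one vertex at level `0`, finitely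
many vertices at each level, edges only between adjacent levels, every vertex of
positive level has a predecessor and every vertex has a follower. -/
structure GradedGraph where
  V : ℕ → Type
  fin : ∀ n, Fintype (V n)
  rootNonempty : Nonempty (V 0)
  rootSubsingleton : Subsingleton (V 0)
  adj : ∀ n, V n → V (n + 1) → Prop
  hasPred : ∀ n (v : V (n + 1)), ∃ w, adj n w v
  hasSucc : ∀ n (v : V n), ∃ u, adj n v u

instance (G : GradedGraph) (n : ℕ) : Fintype (G.V n) := G.fin n

/-- The type of paths from the root to a vertex `v` of level `n`. -/
def GradedGraph.PathTo (G : GradedGraph) : ∀ n, G.V n → Type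
  | 0, _ => PUnit
  | n + 1, v => Σ w : G.V n, PLift (G.adj n w v) × G.PathTo n w

/-- The dimension of a vertex: the number of paths from the root to it. -/
noncomputable def GradedGraph.dim (G : GradedGraph) (n : ℕ) (v : G.V n) : ℕ :=
  Nat.card (G.PathTo n v)

open Classical in
/-- The probability measure on the predecessors of a vertex `v ∈ Γ_{n+1}`
induced by `v`: `ν_v(w) = dim w / dim v` for `w ≺ v`. -/
noncomputable def GradedGraph.nu (G : GradedGraph) (n : ℕ) (v : G.V (n + 1)) :
    G.V n → ℝ :=
  fun w => if G.adj n w v then (G.dim n w : ℝ) / (G.dim (n + 1) v : ℝ) else 0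

open Classical in
/-- The intrinsic semimetric on the levels of a graded graph: the discrete
metric on level `1`, and inductively the Kantorovich distance between the
induced predecessor measures, `ρ_{n+1}(u,v) = k_{ρ_n}(ν_u, ν_v)`. -/
noncomputable def GradedGraph.rho (G : GradedGraph) : ∀ n, G.V n → G.V n → ℝ
  | 0, _, _ => 0
  | 1, u, v => if u = v then 0 else 1
  | n + 2, u, v => kant (G.rho (n + 1)) (G.nu (n + 1) u) (G.nu (n + 1) v)

open Classical in
/-- The intrinsic distance between a vertex `w ∈ Γ_n` and a vertex
`u ∈ Γ_{n+1}` of the next level: `ρ(w, u) = k_{ρ_n}(ν_u, δ_w)`. -/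
noncomputable def GradedGraph.rhoCross (G : GradedGraph) (n : ℕ)
    (w : G.V n) (u : G.V (n + 1)) : ℝ :=
  kant (G.rho n) (G.nu n u) (dirac w)

/-- The intrinsic semimetric between vertices of arbitrary levels `m ≤ n`:
the minimum over paths `z = w_m, w_{m+1}, …, w_n = v` of the sum of the
consecutive adjacent-level distances. -/
noncomputable def GradedGraph.vertDist (G : GradedGraph) {m n : ℕ}
    (z : G.V m) (v : G.V n) : ℝ :=
  sInf { r | ∃ c : ∀ i, G.V i, c m = z ∧ c n = v ∧
    (∀ i, m ≤ i → i < n → G.adj i (c i) (c (i + 1))) ∧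
    r = ∑ i ∈ Finset.Ico m n, G.rhoCross i (c i) (c (i + 1)) }

/-- The Pascal triangle graph: level `n` is `{0, 1, …, n}`, and vertex `(n, k)`
is joined to `(n+1, k)` and `(n+1, k+1)`. -/
def pascal : GradedGraph where
  V n := Fin (n + 1)
  fin _ := inferInstance
  rootNonempty := ⟨0⟩
  rootSubsingleton := ⟨fun a b => Fin.ext (by omega)⟩
  adj _ w v := (v : ℕ) = (w : ℕ) ∨ (v : ℕ) = (w : ℕ) + 1
  hasPred := by
    intro n v
    by_cases h : (v : ℕ) ≤ n
    · exact ⟨⟨(v : ℕ), by omega⟩, Or.inl rfl⟩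
    · refine ⟨⟨n, Nat.lt_succ_self n⟩, Or.inr ?_⟩
      have hv := v.isLt
      show (v : ℕ) = n + 1
      omega
  hasSucc := by
    intro n v
    exact ⟨⟨(v : ℕ), by omega⟩, Or.inl rfl⟩

/-- The vertex `(n, k)` of the Pascal graph. -/
def pvert (n k : ℕ) (h : k ≤ n) : pascal.V n := ⟨k, Nat.lt_succ_of_le h⟩

/-!
Embed level `n` into `[0, 1]` by `(n, k) ↦ k / n` and induct on `n`. Since `dim (n, k) = C(n, k)`,
the measure `ν_u` of `u = (n + 1, k)` has weight `k / (n + 1)` at `(n, k - 1)` and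
`(n + 1 - k) / (n + 1)` at `(n, k)`, so its barycentre is `k / (n + 1)`, the position of `u`.
By induction `ρ_n` is the distance of positions, so positions are `1`-Lipschitz and integrating
them bounds `k(ν_u, ν_v)` below by the distance of the positions of `u` and `v`. For `u < v` the
support of `ν_u` lies weakly to the left of that of `ν_v`, so under the product coupling all mass
moves rightwards and the bound is attained.
-/

section Kantorovich

variable {X : Type*} [Fintype X] {d : X → X → ℝ} {μ ν : X → ℝ} {c : X → X → ℝ}

theorem IsCoupling.prod (hμ : IsProb μ) (hν : IsProb ν) :
    IsCoupling μ ν fun x y => μ x * ν y :=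
  ⟨fun x y => mul_nonneg (hμ.1 x) (hν.1 y), fun x => by rw [← Finset.mul_sum, hν.2, mul_one],
    fun y => by rw [← Finset.sum_mul, hμ.2, one_mul]⟩

theorem IsCoupling.symm (hc : IsCoupling μ ν c) : IsCoupling ν μ fun x y => c y x :=
  ⟨fun x y => hc.1 y x, hc.2.2, hc.2.1⟩

theorem IsCoupling.diag [DecidableEq X] (hμ : ∀ x, 0 ≤ μ x) :
    IsCoupling μ μ fun x y => if x = y then μ x else 0 :=
  ⟨fun x y => by dsimp only; split_ifs <;> simp [hμ], fun x => by simp, fun y => by simp⟩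

/-- The easy half of Kantorovich–Rubinstein duality. -/
theorem IsCoupling.sum_sub_sum_le_cost {g : X → ℝ} (hg : ∀ x y, g x - g y ≤ d x y)
    (hc : IsCoupling μ ν c) :
    ∑ x, g x * μ x - ∑ y, g y * ν y ≤ ∑ x, ∑ y, d x y * c x y := by
  obtain ⟨hc0, hcμ, hcν⟩ := hc
  calc ∑ x, g x * μ x - ∑ y, g y * ν y = ∑ x, ∑ y, (g x - g y) * c x y := by
        simp only [← hcμ, ← hcν, Finset.mul_sum, sub_mul, Finset.sum_sub_distrib]
        rw [Finset.sum_comm (f := fun y x => g y * c x y)]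
    _ ≤ ∑ x, ∑ y, d x y * c x y := by
        gcongr with x _ y _
        exacts [hc0 x y, hg x y]

theorem kant_le_cost (hd : ∀ x y, 0 ≤ d x y) (hc : IsCoupling μ ν c) :
    kant d μ ν ≤ ∑ x, ∑ y, d x y * c x y := by
  refine csInf_le ⟨0, ?_⟩ ⟨c, hc, rfl⟩
  rintro r ⟨c', hc', rfl⟩
  exact Finset.sum_nonneg fun x _ => Finset.sum_nonneg fun y _ => mul_nonneg (hd x y) (hc'.1 x y)

theorem le_kant {b : ℝ} (hc : IsCoupling μ ν c)
    (hb : ∀ c, IsCoupling μ ν c → b ≤ ∑ x, ∑ y, d x y * c x y) : b ≤ kant d μ ν := by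
  refine le_csInf ⟨_, c, hc, rfl⟩ ?_
  rintro r ⟨c', hc', rfl⟩
  exact hb c' hc'

theorem kant_comm (hd : ∀ x y, d x y = d y x) : kant d μ ν = kant d ν μ := by
  have key : ∀ μ ν : X → ℝ, {r | ∃ c, IsCoupling μ ν c ∧ r = ∑ x, ∑ y, d x y * c x y} ⊆
      {r | ∃ c, IsCoupling ν μ c ∧ r = ∑ x, ∑ y, d x y * c x y} := by
    rintro μ ν r ⟨c, hc, rfl⟩
    refine ⟨_, hc.symm, ?_⟩
    rw [Finset.sum_comm]
    simp only [hd]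
  exact congrArg sInf ((key μ ν).antisymm (key ν μ))

theorem kant_self (hd : ∀ x y, 0 ≤ d x y) (hdiag : ∀ x, d x x = 0) (hμ : ∀ x, 0 ≤ μ x) :
    kant d μ μ = 0 := by
  classical
  refine le_antisymm ((kant_le_cost hd (IsCoupling.diag hμ)).trans_eq ?_)
    (le_kant (IsCoupling.diag hμ) fun c hc => ?_)
  · simp [hdiag]
  · exact Finset.sum_nonneg fun x _ => Finset.sum_nonneg fun y _ => mul_nonneg (hd x y) (hc.1 x y)

/-- On a line, if the support of `μ` lies to the left of that of `ν`, every unit of mass moves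
to the right, so the product coupling is optimal. -/
theorem kant_abs_sub_eq_of_le (f : X → ℝ) (hμ : IsProb μ) (hν : IsProb ν)
    (hle : ∀ x y, μ x ≠ 0 → ν y ≠ 0 → f x ≤ f y) :
    kant (fun x y => |f x - f y|) μ ν = ∑ y, f y * ν y - ∑ x, f x * μ x := by
  refine le_antisymm ((kant_le_cost (fun _ _ => abs_nonneg _) (IsCoupling.prod hμ hν)).trans_eq ?_)
    (le_kant (IsCoupling.prod hμ hν) fun c hc => ?_)
  · have hterm : ∀ x y, |f x - f y| * (μ x * ν y) = f y * ν y * μ x - f x * μ x * ν y := by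
      intro x y
      by_cases h : μ x * ν y = 0
      · linear_combination (|f x - f y| - (f y - f x)) * h
      · rw [abs_of_nonpos (sub_nonpos.2 (hle x y (left_ne_zero_of_mul h) (right_ne_zero_of_mul h)))]
        ring
    simp only [hterm, Finset.sum_sub_distrib, ← Finset.mul_sum, ← Finset.sum_mul, hμ.2, hν.2]
    ring
  · have hg : ∀ x y, -f x - -f y ≤ |f x - f y| := fun x y => by
      rw [abs_sub_comm]; exact (le_abs_self _).trans_eq' (by ring)
    have := hc.sum_sub_sum_le_cost hg
    simp only [neg_mul, Finset.sum_neg_distrib] at this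
    linarith

end Kantorovich

namespace GradedGraph

variable (G : GradedGraph)

theorem finite_pathTo : ∀ n (v : G.V n), Finite (G.PathTo n v)
  | 0, _ => inferInstanceAs (Finite PUnit)
  | n + 1, v =>
    have := finite_pathTo n
    inferInstanceAs (Finite (Σ w : G.V n, PLift (G.adj n w v) × G.PathTo n w))

open Classical in
theorem dim_succ (n : ℕ) (v : G.V (n + 1)) :
    G.dim (n + 1) v = ∑ w, if G.adj n w v then G.dim n w else 0 := by
  have := G.finite_pathTo
  rw [dim, PathTo, Nat.card_sigma]
  refine Finset.sum_congr rfl fun w _ => ?_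
  split_ifs with h
  · simp [dim, h]
  · simp [h]

variable {G}

theorem nu_nonneg {n : ℕ} (v : G.V (n + 1)) (w : G.V n) : 0 ≤ G.nu n v w := by
  unfold nu
  split_ifs <;> positivity

theorem adj_of_nu_ne_zero {n : ℕ} {v : G.V (n + 1)} {w : G.V n} (h : G.nu n v w ≠ 0) :
    G.adj n w v := by
  unfold nu at h
  split_ifs at h with hadj
  exacts [hadj, absurd rfl h]

end GradedGraph

instance (n : ℕ) : CoeOut (pascal.V n) ℕ := ⟨Fin.val⟩

noncomputable def pascalPos {n : ℕ} (x : pascal.V n) : ℝ := (x : ℕ) / n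

theorem pascalPos_le_pascalPos {n : ℕ} {x y : pascal.V n} (h : (x : ℕ) ≤ y) :
    pascalPos x ≤ pascalPos y := by
  unfold pascalPos
  gcongr

theorem pascal_adj_iff (m : ℕ) (w : pascal.V m) (u : pascal.V (m + 1)) :
    pascal.adj m w u ↔ (u : ℕ) = w ∨ (u : ℕ) = w + 1 := Iff.rfl

open Classical in
theorem pascal_sum_adj {M : Type*} [AddCommMonoid M] (m : ℕ) (u : pascal.V (m + 1))
    (g : ℕ → M) :
    ∑ w : pascal.V m, (if pascal.adj m w u then g w else 0) =
      (if (u : ℕ) ≤ m then g u else 0) + (if 0 < (u : ℕ) then g (u - 1) else 0) := by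
  have hsplit : ∀ w : pascal.V m, (if pascal.adj m w u then g w else 0) =
      (if (w : ℕ) = u then g w else 0) + (if (w : ℕ) + 1 = u then g w else 0) := by
    intro w
    simp only [pascal_adj_iff]
    split_ifs <;> first | omega | simp
  rw [Finset.sum_congr rfl fun w _ => hsplit w, Finset.sum_add_distrib]
  congr 1
  · refine (Fin.sum_univ_eq_sum_range (fun i => if i = (u : ℕ) then g i else 0) _).trans ?_
    simp
  · refine (Fin.sum_univ_eq_sum_range (fun i => if i + 1 = (u : ℕ) then g i else 0) _).trans ?_
    obtain ⟨_ | k, hk⟩ := u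
    · simp
    · simp
      omega

theorem pascal_dim (n : ℕ) (v : pascal.V n) : pascal.dim n v = n.choose v := by
  induction n with
  | zero =>
    have hv : (v : ℕ) = 0 := Nat.lt_one_iff.mp (Fin.isLt v)
    simp [GradedGraph.dim, GradedGraph.PathTo, hv]
  | succ n ih =>
    rw [pascal.dim_succ]
    simp_rw [ih]
    rw [pascal_sum_adj n v (Nat.choose n)]
    obtain ⟨_ | k, hk⟩ := v
    · simp
    · simp only [Nat.add_sub_cancel, if_pos k.succ_pos, Nat.choose_succ_succ']
      split_ifs with h
      · exact add_comm _ _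
      · simp [Nat.choose_eq_zero_of_lt (show n < k + 1 by omega)]

/-- `ν_u` puts mass `(m + 1 - u) / (m + 1)` on `(m, u)` and `u / (m + 1)` on `(m, u - 1)`. -/
theorem pascal_sum_mul_nu (m : ℕ) (u : pascal.V (m + 1)) (φ : ℕ → ℝ) :
    ∑ w : pascal.V m, φ w * pascal.nu m u w =
      (((m : ℝ) + 1 - u) * φ u + u * φ (u - 1)) / (m + 1) := by
  classical
  have hnu : ∀ w : pascal.V m, φ w * pascal.nu m u w =
      if pascal.adj m w u then φ w * (m.choose w / (m + 1).choose u) else 0 := by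
    intro w
    simp only [GradedGraph.nu, pascal_dim]
    split_ifs <;> simp
  rw [Finset.sum_congr rfl fun w _ => hnu w,
    pascal_sum_adj m u fun t => φ t * (m.choose t / (m + 1).choose u)]
  obtain ⟨_ | k, hk⟩ := u
  · simp
    field_simp
  · simp only [Nat.add_sub_cancel, if_pos k.succ_pos]
    have hk : k ≤ m := by omega
    have hC : ((m + 1).choose (k + 1) : ℝ) ≠ 0 := by
      exact_mod_cast (Nat.choose_pos (by omega)).ne'
    have e1 : (m.choose (k + 1) : ℝ) * (m + 1) = (m + 1).choose (k + 1) * (m - k) := by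
      have := Nat.choose_mul_succ_eq m (k + 1)
      rw [show m + 1 - (k + 1) = m - k by omega] at this
      rw [← Nat.cast_sub hk]
      exact_mod_cast this
    have e2 : ((m : ℝ) + 1) * m.choose k = (m + 1).choose (k + 1) * (k + 1) := by
      exact_mod_cast Nat.add_one_mul_choose_eq m k
    split_ifs with h
    · field_simp
      push_cast
      linear_combination φ (k + 1) * e1 + φ k * e2
    · obtain rfl : k = m := by omega
      field_simp
      push_cast
      linear_combination φ k * e2

theorem pascal_isProb_nu (m : ℕ) (u : pascal.V (m + 1)) : IsProb (pascal.nu m u) := by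
  refine ⟨GradedGraph.nu_nonneg u, ?_⟩
  have := pascal_sum_mul_nu m u fun _ => 1
  simp only [one_mul, mul_one, sub_add_cancel] at this
  rw [this, div_self (by positivity)]

theorem pascal_sum_pos_mul_nu (n : ℕ) (u : pascal.V (n + 2)) :
    ∑ x : pascal.V (n + 1), pascalPos x * pascal.nu (n + 1) u x = pascalPos u := by
  have := pascal_sum_mul_nu (n + 1) u fun t => t / (n + 1 : ℕ)
  unfold pascalPos
  rw [this]
  rcases Nat.eq_zero_or_pos (u : ℕ) with h0 | h0
  · simp [h0]
  · rw [Nat.cast_sub h0]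
    push_cast
    field_simp
    ring

theorem pascal_kant_nu_of_lt (n : ℕ) {u v : pascal.V (n + 2)} (h : (u : ℕ) < v) :
    kant (fun x y => |pascalPos x - pascalPos y|) (pascal.nu (n + 1) u) (pascal.nu (n + 1) v) =
      |pascalPos u - pascalPos v| := by
  rw [kant_abs_sub_eq_of_le _ (pascal_isProb_nu _ u) (pascal_isProb_nu _ v),
    pascal_sum_pos_mul_nu, pascal_sum_pos_mul_nu, abs_sub_comm,
    abs_of_nonneg (sub_nonneg.2 (pascalPos_le_pascalPos h.le))]
  intro x y hx hy
  have hxu := GradedGraph.adj_of_nu_ne_zero hx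
  have hyv := GradedGraph.adj_of_nu_ne_zero hy
  rw [pascal_adj_iff] at hxu hyv
  exact pascalPos_le_pascalPos (by omega)

theorem pascal_rho (n : ℕ) :
    pascal.rho (n + 1) = fun u v => |pascalPos u - pascalPos v| := by
  induction n with
  | zero =>
    funext u v
    simp only [GradedGraph.rho, pascalPos]
    split_ifs with h
    · simp [h]
    · have hne : (u : ℕ) ≠ v := fun e => h (Fin.ext e)
      have hu : (u : ℕ) < 2 := Fin.isLt u
      have hv : (v : ℕ) < 2 := Fin.isLt v
      obtain ⟨hu0, hv1⟩ | ⟨hu1, hv0⟩ :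
          (u : ℕ) = 0 ∧ (v : ℕ) = 1 ∨ (u : ℕ) = 1 ∧ (v : ℕ) = 0 := by omega
      · simp [hu0, hv1]
      · simp [hu1, hv0]
  | succ n ih =>
    funext u v
    change kant (pascal.rho (n + 1)) _ _ = _
    rw [ih]
    rcases lt_trichotomy (u : ℕ) v with h | h | h
    · exact pascal_kant_nu_of_lt n h
    · obtain rfl : u = v := Fin.ext h
      rw [kant_self (fun _ _ => abs_nonneg _) (by simp) (GradedGraph.nu_nonneg u)]
      simp
    · rw [kant_comm (fun _ _ => abs_sub_comm _ _), pascal_kant_nu_of_lt n h, abs_sub_comm]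

/-- in the Pascal triangle graph, the intrinsic metric on level
`n ≥ 1` is `ρ_n((n,i),(n,j)) = |i-j|/n`; in other words, `(Γ_n, ρ_n)` is
isometric to `{i/n : 0 ≤ i ≤ n} ⊆ [0,1]` with the usual metric. -/
theorem pascal_rho_level (n : ℕ) (hn : 1 ≤ n) (i j : ℕ) (hi : i ≤ n) (hj : j ≤ n) :
    pascal.rho n (pvert n i hi) (pvert n j hj) = |(i : ℝ) - (j : ℝ)| / (n : ℝ) := by
  obtain ⟨m, rfl⟩ : ∃ m, n = m + 1 := ⟨n - 1, by omega⟩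
  rw [pascal_rho m]
  change |(i : ℝ) / (m + 1 : ℕ) - (j : ℝ) / (m + 1 : ℕ)| = _
  rw [← sub_div, abs_div, Nat.abs_cast]
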